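/- arXiv:2110.11234 — 4 statements merged into one kernel-verified Lean document; each statement's English description precedes it below -/
import Mathlib

section
/- Suppose the g-fusion frame operator S_gF of the family {(F(x), Λ_x, v(x))}_{x∈X} exists as a bounded operator on H and commutes with T. Then the family is a continuous (T,U)-controlled g-fusion frame for H with bounds A and B if and only if it is a continuous (TU, I_H)-controlled g-fusion frame for H with the same bounds A and B, i.e. A‖f‖² ≤ ∫_X v(x)² ⟨Λ_x P_{F(x)} T U f, Λ_x P_{F(x)} f⟩ dμ(x) ≤ B‖f‖² for all f ∈ H. -/
open MeasureTheory ContinuousLinearMap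
open scoped ComplexOrder

/-- The orthogonal projection onto a closed subspace, as an operator `H →L[ℂ] H`. -/
noncomputable def ctrlProj {H : Type*} [NormedAddCommGroup H] [InnerProductSpace ℂ H]
    (F : Submodule ℂ H) [F.HasOrthogonalProjection] : H →L[ℂ] H :=
  F.subtypeL.comp F.orthogonalProjectionOnto


lemma ctrlProj_selfAdjoint {H : Type*} [NormedAddCommGroup H] [InnerProductSpace ℂ H]
    [CompleteSpace H] (F : Submodule ℂ H) [F.HasOrthogonalProjection] :
    adjoint (ctrlProj F) = ctrlProj F := by
  ext f
  apply ext_inner_right ℂ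
  intro g
  rw [adjoint_inner_left]
  exact (Submodule.inner_starProjection_left_eq_right F f g).symm

lemma key_inner {H : Type*} [NormedAddCommGroup H] [InnerProductSpace ℂ H] [CompleteSpace H]
    {K : Type*} [NormedAddCommGroup K] [InnerProductSpace ℂ K] [CompleteSpace K]
    (F : Submodule ℂ H) [F.HasOrthogonalProjection] (Λ : H →L[ℂ] K) (a b : H) :
    (inner ℂ ((ctrlProj F) ((adjoint Λ) (Λ ((ctrlProj F) a)))) b : ℂ)
      = inner ℂ (Λ ((ctrlProj F) a)) (Λ ((ctrlProj F) b)) := by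
  rw [← adjoint_inner_right (ctrlProj F), ctrlProj_selfAdjoint, adjoint_inner_left]


/-- If the `g`-fusion frame operator `S_gF` exists as a bounded operator and
commutes with `T`, then the family is a continuous `(T,U)`-controlled `g`-fusion frame with
bounds `A, B` iff it is a continuous `(TU, I_H)`-controlled `g`-fusion frame with the same
bounds. -/
theorem stmt5
    {H : Type*} [NormedAddCommGroup H] [InnerProductSpace ℂ H] [CompleteSpace H]
    {X : Type*} [MeasurableSpace X] (μ : Measure X)
    {K : X → Type*} [∀ x, NormedAddCommGroup (K x)] [∀ x, InnerProductSpace ℂ (K x)]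
    [∀ x, CompleteSpace (K x)]
    (F : X → Submodule ℂ H) [∀ x, (F x).HasOrthogonalProjection]
    (Λ : ∀ x, H →L[ℂ] K x) (v : X → ℝ) (T U : H →L[ℂ] H)
    (hv : Measurable v) (hvpos : ∀ x, 0 < v x)
    (hT : T.IsPositive) (hU : U.IsPositive) (hTinv : IsUnit T) (hUinv : IsUnit U)
    (hFmeas : ∀ f g : H, Measurable fun x => (inner ℂ ((ctrlProj (F x)) f) g : ℂ))
    -- S is the g-fusion frame operator, a bounded operator commuting with T
    (S : H →L[ℂ] H)
    (hSint : ∀ f g : H, Integrable (fun x => ((v x : ℂ))^2 *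
      (inner ℂ ((ctrlProj (F x)) ((adjoint (Λ x)) (Λ x ((ctrlProj (F x)) f)))) g : ℂ)) μ)
    (hS : ∀ f g : H, (inner ℂ (S f) g : ℂ) = ∫ x, ((v x : ℂ))^2 *
      (inner ℂ ((ctrlProj (F x)) ((adjoint (Λ x)) (Λ x ((ctrlProj (F x)) f)))) g : ℂ) ∂μ)
    (hST : S.comp T = T.comp S)
    (A B : ℝ) (hA : 0 < A) (hAB : A ≤ B) :
    -- (T,U)-controlled frame with bounds A, B ↔ (TU, I_H)-controlled frame with bounds A, B
    ((∀ f : H,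
        Integrable (fun x => ((v x : ℂ))^2 *
          (inner ℂ (Λ x ((ctrlProj (F x)) (U f))) (Λ x ((ctrlProj (F x)) (T f))) : ℂ)) μ ∧
        ((A * ‖f‖^2 : ℝ) : ℂ) ≤
          (∫ x, ((v x : ℂ))^2 *
            (inner ℂ (Λ x ((ctrlProj (F x)) (U f))) (Λ x ((ctrlProj (F x)) (T f))) : ℂ) ∂μ) ∧
        (∫ x, ((v x : ℂ))^2 *
            (inner ℂ (Λ x ((ctrlProj (F x)) (U f))) (Λ x ((ctrlProj (F x)) (T f))) : ℂ) ∂μ)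
          ≤ ((B * ‖f‖^2 : ℝ) : ℂ)) ↔
      (∀ f : H,
        Integrable (fun x => ((v x : ℂ))^2 *
          (inner ℂ (Λ x ((ctrlProj (F x)) (T (U f)))) (Λ x ((ctrlProj (F x)) f)) : ℂ)) μ ∧
        ((A * ‖f‖^2 : ℝ) : ℂ) ≤
          (∫ x, ((v x : ℂ))^2 *
            (inner ℂ (Λ x ((ctrlProj (F x)) (T (U f)))) (Λ x ((ctrlProj (F x)) f)) : ℂ) ∂μ) ∧
        (∫ x, ((v x : ℂ))^2 *
            (inner ℂ (Λ x ((ctrlProj (F x)) (T (U f)))) (Λ x ((ctrlProj (F x)) f)) : ℂ) ∂μ)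
          ≤ ((B * ‖f‖^2 : ℝ) : ℂ))) := by
  -- pointwise rewriting of both integrands
  have e1 : ∀ f : H, (fun x => ((v x : ℂ))^2 *
      (inner ℂ (Λ x ((ctrlProj (F x)) (U f))) (Λ x ((ctrlProj (F x)) (T f))) : ℂ))
      = fun x => ((v x : ℂ))^2 *
      (inner ℂ ((ctrlProj (F x)) ((adjoint (Λ x)) (Λ x ((ctrlProj (F x)) (U f))))) (T f) : ℂ) := by
    intro f; funext x; rw [key_inner]
  have e2 : ∀ f : H, (fun x => ((v x : ℂ))^2 *
      (inner ℂ (Λ x ((ctrlProj (F x)) (T (U f)))) (Λ x ((ctrlProj (F x)) f)) : ℂ))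
      = fun x => ((v x : ℂ))^2 *
      (inner ℂ ((ctrlProj (F x)) ((adjoint (Λ x)) (Λ x ((ctrlProj (F x)) (T (U f)))))) f : ℂ) := by
    intro f; funext x; rw [key_inner]
  have hint1 : ∀ f : H, Integrable (fun x => ((v x : ℂ))^2 *
      (inner ℂ (Λ x ((ctrlProj (F x)) (U f))) (Λ x ((ctrlProj (F x)) (T f))) : ℂ)) μ := by
    intro f; rw [e1 f]; exact hSint (U f) (T f)
  have hint2 : ∀ f : H, Integrable (fun x => ((v x : ℂ))^2 *
      (inner ℂ (Λ x ((ctrlProj (F x)) (T (U f)))) (Λ x ((ctrlProj (F x)) f)) : ℂ)) μ := by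
    intro f; rw [e2 f]; exact hSint (T (U f)) f
  have hTsa : adjoint T = T := hT.isSelfAdjoint
  have hIeq : ∀ f : H,
      (∫ x, ((v x : ℂ))^2 *
        (inner ℂ (Λ x ((ctrlProj (F x)) (U f))) (Λ x ((ctrlProj (F x)) (T f))) : ℂ) ∂μ)
      = ∫ x, ((v x : ℂ))^2 *
        (inner ℂ (Λ x ((ctrlProj (F x)) (T (U f)))) (Λ x ((ctrlProj (F x)) f)) : ℂ) ∂μ := by
    intro f
    rw [e1 f, e2 f, ← hS (U f) (T f), ← hS (T (U f)) f]
    have hc : T (S (U f)) = S (T (U f)) := by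
      have := congrArg (fun W : H →L[ℂ] H => W (U f)) hST
      simpa using this.symm
    rw [← adjoint_inner_left T, hTsa, hc]
  constructor
  · intro h f
    obtain ⟨_, h1, h2⟩ := h f
    exact ⟨hint2 f, by rw [← hIeq f]; exact h1, by rw [← hIeq f]; exact h2⟩
  · intro h f
    obtain ⟨_, h1, h2⟩ := h f
    exact ⟨hint1 f, by rw [hIeq f]; exact h1, by rw [hIeq f]; exact h2⟩
end

section
/- Suppose T and U commute, the g-fusion frame operator S_gF of {(F(x), Λ_x, v(x))}_{x∈X} exists as a bounded operator on H and commutes with both T and U. Then the family is a continuous (T,U)-controlled g-fusion frame for H with bounds A and B if and only if it is a continuous ((TU)^{1/2}, (TU)^{1/2})-controlled g-fusion frame for H with the same bounds A and B, where (TU)^{1/2} is the positive square root of the positive invertible operator TU. -/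
open MeasureTheory ContinuousLinearMap
open scoped ComplexOrder

open Polynomial in
set_option maxHeartbeats 1000000 in
set_option synthInstance.maxHeartbeats 1000000 in
/-- An operator commuting with a self-adjoint operator `a` commutes with `cfc f a`. -/
lemma commute_cfc_of_commute {H : Type*} [NormedAddCommGroup H] [InnerProductSpace ℂ H]
    [CompleteSpace H] {a b : H →L[ℂ] H} (ha : IsSelfAdjoint a)
    (hab : Commute b a) (f : ℝ → ℝ) : Commute b (cfc f a) := by
  by_cases hf : ContinuousOn f (spectrum ℝ a)
  · rw [cfc_apply f a ha hf]
    set s : Set ℝ := spectrum ℝ a with hs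
    suffices hsuff : ∀ g : C(s, ℝ), Commute b (cfcHom ha g) from hsuff _
    intro g
    have hX : cfcHom ha (X.toContinuousMapOn s) = a := by
      have : (X.toContinuousMapOn s : C(s, ℝ)) =
          (ContinuousMap.id ℝ).restrict s := by ext x; simp
      rw [this]; exact cfcHom_id ha
    have hclosed : IsClosed {g : C(s, ℝ) | Commute b (cfcHom ha g)} := by
      simp only [Commute, SemiconjBy]
      exact isClosed_eq (continuous_const.mul (cfcHom_continuous ha))
        ((cfcHom_continuous ha).mul continuous_const)
    have hsub : (polynomialFunctions s : Set C(s, ℝ)) ⊆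
        {g : C(s, ℝ) | Commute b (cfcHom ha g)} := by
      intro g hg
      rw [SetLike.mem_coe, polynomialFunctions.eq_adjoin_X] at hg
      have hmem : cfcHom ha g ∈ Algebra.adjoin ℝ {a} := by
        have : cfcHom ha g ∈ (Algebra.adjoin ℝ {toContinuousMapOnAlgHom s X}).map
            ((cfcHom ha : C(s, ℝ) →⋆ₐ[ℝ] (H →L[ℂ] H)) : C(s, ℝ) →ₐ[ℝ] (H →L[ℂ] H)) :=
          Subalgebra.mem_map.mpr ⟨g, hg, rfl⟩
        rw [AlgHom.map_adjoin] at this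
        simpa [hX] using this
      exact Algebra.commute_of_mem_adjoin_singleton_of_commute hmem hab
    have hgmem : g ∈ closure ((polynomialFunctions s : Set C(s, ℝ))) := by
      have htop := polynomialFunctions.topologicalClosure s
      have : g ∈ (polynomialFunctions s).topologicalClosure := by rw [htop]; trivial
      exact this
    exact closure_minimal hsub hclosed hgmem
  · simp [cfc_apply_of_not_continuousOn a hf]

set_option maxHeartbeats 1000000 in
set_option synthInstance.maxHeartbeats 1000000 in
/-- Suppose `T` and `U` commute and the `g`-fusion frame operator `S_gF`
commutes with both. Then the family is a continuous `(T,U)`-controlled `g`-fusion frame with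
bounds `A, B` iff it is a continuous `((TU)^{1/2}, (TU)^{1/2})`-controlled `g`-fusion frame with
the same bounds, where `R = (TU)^{1/2}` is the positive square root of `TU`. -/
theorem stmt6
    {H : Type*} [NormedAddCommGroup H] [InnerProductSpace ℂ H] [CompleteSpace H]
    {X : Type*} [MeasurableSpace X] (μ : Measure X)
    {K : X → Type*} [∀ x, NormedAddCommGroup (K x)] [∀ x, InnerProductSpace ℂ (K x)]
    [∀ x, CompleteSpace (K x)]
    (F : X → Submodule ℂ H) [∀ x, (F x).HasOrthogonalProjection]
    (Λ : ∀ x, H →L[ℂ] K x) (v : X → ℝ) (T U : H →L[ℂ] H)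
    (hv : Measurable v) (hvpos : ∀ x, 0 < v x)
    (hT : T.IsPositive) (hU : U.IsPositive) (hTinv : IsUnit T) (hUinv : IsUnit U)
    (hTU : T.comp U = U.comp T)
    (hFmeas : ∀ f g : H, Measurable fun x => (inner ℂ ((ctrlProj (F x)) f) g : ℂ))
    -- S is the g-fusion frame operator, a bounded operator commuting with T and U
    (S : H →L[ℂ] H)
    (hSint : ∀ f g : H, Integrable (fun x => ((v x : ℂ))^2 *
      (inner ℂ ((ctrlProj (F x)) ((adjoint (Λ x)) (Λ x ((ctrlProj (F x)) f)))) g : ℂ)) μ)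
    (hS : ∀ f g : H, (inner ℂ (S f) g : ℂ) = ∫ x, ((v x : ℂ))^2 *
      (inner ℂ ((ctrlProj (F x)) ((adjoint (Λ x)) (Λ x ((ctrlProj (F x)) f)))) g : ℂ) ∂μ)
    (hST : S.comp T = T.comp S) (hSU : S.comp U = U.comp S)
    -- R is the positive square root of TU
    (R : H →L[ℂ] H) (hRpos : R.IsPositive) (hR : R.comp R = T.comp U)
    (A B : ℝ) (hA : 0 < A) (hAB : A ≤ B) :
    ((∀ f : H,
        Integrable (fun x => ((v x : ℂ))^2 *
          (inner ℂ (Λ x ((ctrlProj (F x)) (U f))) (Λ x ((ctrlProj (F x)) (T f))) : ℂ)) μ ∧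
        ((A * ‖f‖^2 : ℝ) : ℂ) ≤
          (∫ x, ((v x : ℂ))^2 *
            (inner ℂ (Λ x ((ctrlProj (F x)) (U f))) (Λ x ((ctrlProj (F x)) (T f))) : ℂ) ∂μ) ∧
        (∫ x, ((v x : ℂ))^2 *
            (inner ℂ (Λ x ((ctrlProj (F x)) (U f))) (Λ x ((ctrlProj (F x)) (T f))) : ℂ) ∂μ)
          ≤ ((B * ‖f‖^2 : ℝ) : ℂ)) ↔
      (∀ f : H,
        Integrable (fun x => ((v x : ℂ))^2 *
          (inner ℂ (Λ x ((ctrlProj (F x)) (R f))) (Λ x ((ctrlProj (F x)) (R f))) : ℂ)) μ ∧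
        ((A * ‖f‖^2 : ℝ) : ℂ) ≤
          (∫ x, ((v x : ℂ))^2 *
            (inner ℂ (Λ x ((ctrlProj (F x)) (R f))) (Λ x ((ctrlProj (F x)) (R f))) : ℂ) ∂μ) ∧
        (∫ x, ((v x : ℂ))^2 *
            (inner ℂ (Λ x ((ctrlProj (F x)) (R f))) (Λ x ((ctrlProj (F x)) (R f))) : ℂ) ∂μ)
          ≤ ((B * ‖f‖^2 : ℝ) : ℂ))) := by
  
  classical
  have hTsa : IsSelfAdjoint T := hT.isSelfAdjoint
  have hUsa : IsSelfAdjoint U := hU.isSelfAdjoint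
  have hRsa : IsSelfAdjoint R := hRpos.isSelfAdjoint
  -- pointwise identity between the two kinds of integrands
  have hpt : ∀ (x : X) (u w : H),
      ((v x : ℂ))^2 *
        (inner ℂ ((ctrlProj (F x)) ((adjoint (Λ x)) (Λ x ((ctrlProj (F x)) u)))) w : ℂ)
      = ((v x : ℂ))^2 *
        (inner ℂ (Λ x ((ctrlProj (F x)) u)) (Λ x ((ctrlProj (F x)) w)) : ℂ) := by
    intro x u w
    congr 1
    have hP : ∀ y z : H, (inner ℂ ((ctrlProj (F x)) y) z : ℂ) =
        inner ℂ y ((ctrlProj (F x)) z) := by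
      intro y z
      exact Submodule.inner_starProjection_left_eq_right (F x) y z
    rw [hP, ContinuousLinearMap.adjoint_inner_left]
  have keyInt : ∀ u w : H, Integrable (fun x => ((v x : ℂ))^2 *
      (inner ℂ (Λ x ((ctrlProj (F x)) u)) (Λ x ((ctrlProj (F x)) w)) : ℂ)) μ := by
    intro u w
    have h := hSint u w
    simpa only [hpt] using h
  have keyEq : ∀ u w : H, (∫ x, ((v x : ℂ))^2 *
      (inner ℂ (Λ x ((ctrlProj (F x)) u)) (Λ x ((ctrlProj (F x)) w)) : ℂ) ∂μ)
      = (inner ℂ (S u) w : ℂ) := by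
    intro u w
    rw [hS u w]
    simp only [hpt]
  -- algebraic facts about R and S
  have hRmul : R * R = T * U := hR
  have hST' : S * T = T * S := hST
  have hSU' : S * U = U * S := hSU
  have hTU' : T * U = U * T := hTU
  have hTUnn : (0 : H →L[ℂ] H) ≤ T * U := by
    rw [← hRmul]
    have h := star_mul_self_nonneg R
    rwa [hRsa.star_eq] at h
  have hTUsa : IsSelfAdjoint (T * U) := by
    rw [IsSelfAdjoint, star_mul, hUsa.star_eq, hTsa.star_eq, ← hTU']
  have hSTU : Commute S (T * U) := by
    show S * (T * U) = (T * U) * S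
    rw [← mul_assoc, hST', mul_assoc, hSU', ← mul_assoc]
  have hR'nn : (0 : H →L[ℂ] H) ≤ cfc Real.sqrt (T * U) :=
    cfc_nonneg fun x _ => Real.sqrt_nonneg x
  have hR'sq : cfc Real.sqrt (T * U) * cfc Real.sqrt (T * U) = T * U := by
    rw [← cfc_mul _ _ (T * U) (Real.continuous_sqrt.continuousOn)
      (Real.continuous_sqrt.continuousOn)]
    have hEq : Set.EqOn (fun x : ℝ => Real.sqrt x * Real.sqrt x) id (spectrum ℝ (T * U)) :=
      fun x hx => Real.mul_self_sqrt (spectrum_nonneg_of_nonneg hTUnn hx)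
    rw [cfc_congr hEq, cfc_id ℝ (T * U)]
  have hReq : R = cfc Real.sqrt (T * U) := by
    have h1 : CFC.sqrt (T * U) = R :=
      CFC.sqrt_unique hRmul ((ContinuousLinearMap.nonneg_iff_isPositive R).mpr hRpos)
    have h2 : CFC.sqrt (T * U) = cfc Real.sqrt (T * U) := CFC.sqrt_unique hR'sq hR'nn
    rw [← h1, h2]
  have hSR : Commute S R := by
    rw [hReq]; exact commute_cfc_of_commute hTUsa hSTU Real.sqrt
  -- the two sesquilinear quantities agree
  have hval : ∀ f : H, (inner ℂ (S (U f)) (T f) : ℂ) = inner ℂ (S (R f)) (R f) := by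
    intro f
    have e1 : (inner ℂ (S (U f)) (T f) : ℂ) = inner ℂ (T (S (U f))) f := by
      conv_lhs => rw [← hTsa.adjoint_eq]
      rw [ContinuousLinearMap.adjoint_inner_right]
    have e2 : T (S (U f)) = S (R (R f)) := by
      have h1 : T (S (U f)) = S (T (U f)) := by
        have := DFunLike.congr_fun hST (U f)
        simpa using this.symm
      have h2 : T (U f) = R (R f) := by
        have := DFunLike.congr_fun hR f
        simpa using this.symm
      rw [h1, h2]
    have e3 : S (R (R f)) = R (S (R f)) := by
      have := DFunLike.congr_fun hSR.symm (R f)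
      simpa using this.symm
    have e4 : (inner ℂ (R (S (R f))) f : ℂ) = inner ℂ (S (R f)) (R f) := by
      have h := ContinuousLinearMap.adjoint_inner_left R f (S (R f))
      rwa [hRsa.adjoint_eq] at h
    rw [e1, e2, e3, e4]
  constructor
  · intro h f
    obtain ⟨-, h2, h3⟩ := h f
    rw [keyEq] at h2 h3
    refine ⟨keyInt _ _, ?_, ?_⟩
    · rw [keyEq, ← hval f]; exact h2
    · rw [keyEq, ← hval f]; exact h3
  · intro h f
    obtain ⟨-, h2, h3⟩ := h f
    rw [keyEq] at h2 h3
    refine ⟨keyInt _ _, ?_, ?_⟩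
    · rw [keyEq, hval f]; exact h2
    · rw [keyEq, hval f]; exact h3
end

section
/- Let Λ_TT = {(F(x), Λ_x, v(x))}_{x∈X} be a continuous (T,T)-controlled g-fusion Bessel family for H with bound B, and suppose that the family {v(x)² T* P_{F(x)} Λ_x* Λ_x P_{F(x)} U}_{x∈X} is a continuous resolution of the identity operator on H. Then Λ is a continuous (U,U)-controlled g-fusion frame for H with bounds 1/B and B‖T^{-1}‖²‖U‖²: for all f ∈ H, (1/B)‖f‖² ≤ ∫_X v(x)² ⟨Λ_x P_{F(x)} U f, Λ_x P_{F(x)} U f⟩ dμ(x) ≤ B‖T^{-1}‖²‖U‖²‖f‖². -/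
open MeasureTheory ContinuousLinearMap
open scoped ComplexOrder

/-- If `Λ_TT` is a continuous `(T,T)`-controlled `g`-fusion Bessel family for
`H` with bound `B` and `{v(x)² T* P_{F x} Λₓ* Λₓ P_{F x} U}` is a continuous resolution of the
identity operator on `H`, then `Λ` is a continuous `(U,U)`-controlled `g`-fusion frame for `H`
with bounds `1/B` and `B‖T⁻¹‖²‖U‖²`. -/
theorem stmt10
    {H : Type*} [NormedAddCommGroup H] [InnerProductSpace ℂ H] [CompleteSpace H]
    {X : Type*} [MeasurableSpace X] (μ : Measure X)
    {K : X → Type*} [∀ x, NormedAddCommGroup (K x)] [∀ x, InnerProductSpace ℂ (K x)]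
    [∀ x, CompleteSpace (K x)]
    (F : X → Submodule ℂ H) [∀ x, (F x).HasOrthogonalProjection]
    (Λ : ∀ x, H →L[ℂ] K x) (v : X → ℝ) (T U : H →L[ℂ] H)
    (hv : Measurable v) (hvpos : ∀ x, 0 < v x)
    (hT : T.IsPositive) (hU : U.IsPositive) (hUinv : IsUnit U)
    (hFmeas : ∀ f g : H, Measurable fun x => (inner ℂ ((ctrlProj (F x)) f) g : ℂ))
    -- T is invertible with inverse Tinv
    (Tinv : H →L[ℂ] H)
    (hT₁ : T.comp Tinv = ContinuousLinearMap.id ℂ H)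
    (hT₂ : Tinv.comp T = ContinuousLinearMap.id ℂ H)
    (B : ℝ) (hB : 0 < B)
    -- Λ_TT is a continuous (T,T)-controlled g-fusion Bessel family with bound B
    (hΛint : ∀ f : H,
      Integrable (fun x => (v x)^2 * ‖Λ x ((ctrlProj (F x)) (T f))‖^2) μ)
    (hΛBessel : ∀ f : H,
      (∫ x, (v x)^2 * ‖Λ x ((ctrlProj (F x)) (T f))‖^2 ∂μ) ≤ B * ‖f‖^2)
    -- {v(x)² T* P_{F x} Λₓ* Λₓ P_{F x} U} is a continuous resolution of the identity
    (hresint : ∀ f g : H, Integrable (fun x => ((v x : ℂ))^2 *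
      (inner ℂ ((adjoint T) ((ctrlProj (F x)) ((adjoint (Λ x))
        (Λ x ((ctrlProj (F x)) (U f)))))) g : ℂ)) μ)
    (hres : ∀ f g : H, (inner ℂ f g : ℂ) = ∫ x, ((v x : ℂ))^2 *
      (inner ℂ ((adjoint T) ((ctrlProj (F x)) ((adjoint (Λ x))
        (Λ x ((ctrlProj (F x)) (U f)))))) g : ℂ) ∂μ) :
    ∀ f : H,
      Integrable (fun x => (v x)^2 * ‖Λ x ((ctrlProj (F x)) (U f))‖^2) μ ∧
      (1 / B) * ‖f‖^2 ≤ (∫ x, (v x)^2 * ‖Λ x ((ctrlProj (F x)) (U f))‖^2 ∂μ) ∧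
      (∫ x, (v x)^2 * ‖Λ x ((ctrlProj (F x)) (U f))‖^2 ∂μ)
        ≤ B * ‖Tinv‖^2 * ‖U‖^2 * ‖f‖^2 := by
  intro f
  have hTTinv : ∀ y : H, T (Tinv y) = y := by
    intro y
    have := ContinuousLinearMap.ext_iff.mp hT₁ y
    simpa using this
  -- integrability of the (U,U) expression
  have intU : Integrable (fun x => (v x)^2 * ‖Λ x ((ctrlProj (F x)) (U f))‖^2) μ := by
    simpa [hTTinv] using hΛint (Tinv (U f))
  have intT : Integrable (fun x => (v x)^2 * ‖Λ x ((ctrlProj (F x)) (T f))‖^2) μ :=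
    hΛint f
  set IU := ∫ x, (v x)^2 * ‖Λ x ((ctrlProj (F x)) (U f))‖^2 ∂μ with hIU
  set IT := ∫ x, (v x)^2 * ‖Λ x ((ctrlProj (F x)) (T f))‖^2 ∂μ with hIT
  have hIUnn : 0 ≤ IU := by
    apply integral_nonneg
    intro x
    positivity
  have hITnn : 0 ≤ IT := by
    apply integral_nonneg
    intro x
    positivity
  -- upper bound
  have hupper : IU ≤ B * ‖Tinv‖^2 * ‖U‖^2 * ‖f‖^2 := by
    have h1 : IU ≤ B * ‖Tinv (U f)‖^2 := by
      have := hΛBessel (Tinv (U f))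
      simpa [hTTinv, hIU] using this
    have h2 : ‖Tinv (U f)‖ ≤ ‖Tinv‖ * (‖U‖ * ‖f‖) :=
      le_trans (Tinv.le_opNorm _) (by
        have := U.le_opNorm f
        exact mul_le_mul_of_nonneg_left this (norm_nonneg Tinv))
    have h3 : ‖Tinv (U f)‖^2 ≤ (‖Tinv‖ * (‖U‖ * ‖f‖))^2 := by
      exact pow_le_pow_left₀ (norm_nonneg _) h2 2
    calc IU ≤ B * ‖Tinv (U f)‖^2 := h1
      _ ≤ B * (‖Tinv‖ * (‖U‖ * ‖f‖))^2 := by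
          exact mul_le_mul_of_nonneg_left h3 hB.le
      _ = B * ‖Tinv‖^2 * ‖U‖^2 * ‖f‖^2 := by ring
  -- pointwise identity relating the resolution integrand to an inner product in K x
  have key : ∀ x : X, ((v x : ℂ))^2 *
      (inner ℂ ((adjoint T) ((ctrlProj (F x)) ((adjoint (Λ x))
        (Λ x ((ctrlProj (F x)) (U f)))))) f : ℂ)
      = ((v x : ℂ))^2 * (inner ℂ (Λ x ((ctrlProj (F x)) (U f)))
          (Λ x ((ctrlProj (F x)) (T f))) : ℂ) := by
    intro x
    congr 1
    rw [ContinuousLinearMap.adjoint_inner_left]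
    have hP : ∀ w z : H, (inner ℂ ((ctrlProj (F x)) w) z : ℂ)
        = inner ℂ w ((ctrlProj (F x)) z) := by
      intro w z
      exact Submodule.inner_starProjection_left_eq_right (F x) w z
    rw [hP, ContinuousLinearMap.adjoint_inner_left]
  -- the identity ⟨f,f⟩ = ∫ v² ⟨Λ P U f, Λ P T f⟩
  have hid : (‖f‖^2 : ℂ) = ∫ x, ((v x : ℂ))^2 * (inner ℂ (Λ x ((ctrlProj (F x)) (U f)))
      (Λ x ((ctrlProj (F x)) (T f))) : ℂ) ∂μ := by
    have h0 : (inner ℂ f f : ℂ) = ∫ x, ((v x : ℂ))^2 *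
        (inner ℂ (Λ x ((ctrlProj (F x)) (U f))) (Λ x ((ctrlProj (F x)) (T f))) : ℂ) ∂μ := by
      rw [hres f f]
      exact integral_congr_ae (Filter.Eventually.of_forall key)
    rw [← h0]
    rw [inner_self_eq_norm_sq_to_K]
    norm_num
  -- measurability of the two square-integrable real functions
  have aU : AEStronglyMeasurable (fun x => v x * ‖Λ x ((ctrlProj (F x)) (U f))‖) μ := by
    have h := intU.aestronglyMeasurable
    have : (fun x => v x * ‖Λ x ((ctrlProj (F x)) (U f))‖)
        = fun x => Real.sqrt ((v x)^2 * ‖Λ x ((ctrlProj (F x)) (U f))‖^2) := by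
      funext x
      rw [← mul_pow, Real.sqrt_sq (mul_nonneg (hvpos x).le (norm_nonneg _))]
    rw [this]
    exact Real.continuous_sqrt.comp_aestronglyMeasurable h
  have aT : AEStronglyMeasurable (fun x => v x * ‖Λ x ((ctrlProj (F x)) (T f))‖) μ := by
    have h := intT.aestronglyMeasurable
    have : (fun x => v x * ‖Λ x ((ctrlProj (F x)) (T f))‖)
        = fun x => Real.sqrt ((v x)^2 * ‖Λ x ((ctrlProj (F x)) (T f))‖^2) := by
      funext x
      rw [← mul_pow, Real.sqrt_sq (mul_nonneg (hvpos x).le (norm_nonneg _))]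
    rw [this]
    exact Real.continuous_sqrt.comp_aestronglyMeasurable h
  have memU : MemLp (fun x => v x * ‖Λ x ((ctrlProj (F x)) (U f))‖) 2 μ := by
    rw [memLp_two_iff_integrable_sq aU]
    simpa [mul_pow] using intU
  have memT : MemLp (fun x => v x * ‖Λ x ((ctrlProj (F x)) (T f))‖) 2 μ := by
    rw [memLp_two_iff_integrable_sq aT]
    simpa [mul_pow] using intT
  -- product is integrable
  have intprod : Integrable (fun x => (v x * ‖Λ x ((ctrlProj (F x)) (U f))‖) *
      (v x * ‖Λ x ((ctrlProj (F x)) (T f))‖)) μ := by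
    have := (memLp_one_iff_integrable).mp
      (memT.smul memU (r := 1))
    simpa [Pi.smul_apply, smul_eq_mul, Pi.mul_def] using this
  -- ‖f‖² ≤ ∫ product
  have hcs1 : ‖f‖^2 ≤ ∫ x, (v x * ‖Λ x ((ctrlProj (F x)) (U f))‖) *
      (v x * ‖Λ x ((ctrlProj (F x)) (T f))‖) ∂μ := by
    have h1 : ‖f‖^2 = ‖(‖f‖^2 : ℂ)‖ := by
      simp [Complex.norm_real]
    rw [h1, hid]
    refine le_trans (norm_integral_le_integral_norm _) ?_
    refine integral_mono_of_nonneg (Filter.Eventually.of_forall fun x => norm_nonneg _)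
      intprod (Filter.Eventually.of_forall fun x => ?_)
    have hx := hvpos x
    calc ‖((v x : ℂ))^2 * (inner ℂ (Λ x ((ctrlProj (F x)) (U f)))
          (Λ x ((ctrlProj (F x)) (T f))) : ℂ)‖
        = (v x)^2 * ‖(inner ℂ (Λ x ((ctrlProj (F x)) (U f)))
          (Λ x ((ctrlProj (F x)) (T f))) : ℂ)‖ := by
          rw [norm_mul, norm_pow, Complex.norm_real, Real.norm_of_nonneg hx.le]
      _ ≤ (v x)^2 * (‖Λ x ((ctrlProj (F x)) (U f))‖ * ‖Λ x ((ctrlProj (F x)) (T f))‖) := by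
          exact mul_le_mul_of_nonneg_left (norm_inner_le_norm _ _) (by positivity)
      _ = (v x * ‖Λ x ((ctrlProj (F x)) (U f))‖) * (v x * ‖Λ x ((ctrlProj (F x)) (T f))‖) := by
          ring
  -- Cauchy–Schwarz (Hölder with p = q = 2)
  have hcs2 : (∫ x, (v x * ‖Λ x ((ctrlProj (F x)) (U f))‖) *
      (v x * ‖Λ x ((ctrlProj (F x)) (T f))‖) ∂μ) ≤ Real.sqrt IU * Real.sqrt IT := by
    have hconj : (2 : ℝ).HolderConjugate 2 := Real.HolderConjugate.two_two
    have h := integral_mul_le_Lp_mul_Lq_of_nonneg hconj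
      (f := fun x => v x * ‖Λ x ((ctrlProj (F x)) (U f))‖)
      (g := fun x => v x * ‖Λ x ((ctrlProj (F x)) (T f))‖)
      (Filter.Eventually.of_forall fun x => mul_nonneg (hvpos x).le (norm_nonneg _))
      (Filter.Eventually.of_forall fun x => mul_nonneg (hvpos x).le (norm_nonneg _))
      (by simpa using memU) (by simpa using memT)
    have e1 : (∫ x, (v x * ‖Λ x ((ctrlProj (F x)) (U f))‖) ^ (2:ℝ) ∂μ) = IU := by
      rw [hIU]
      congr 1
      funext x
      rw [show ((2:ℝ)) = ((2:ℕ) : ℝ) by norm_num, Real.rpow_natCast, mul_pow]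
    have e2 : (∫ x, (v x * ‖Λ x ((ctrlProj (F x)) (T f))‖) ^ (2:ℝ) ∂μ) = IT := by
      rw [hIT]
      congr 1
      funext x
      rw [show ((2:ℝ)) = ((2:ℕ) : ℝ) by norm_num, Real.rpow_natCast, mul_pow]
    rw [e1, e2] at h
    rw [Real.sqrt_eq_rpow, Real.sqrt_eq_rpow]
    exact h
  -- lower bound
  have hlower : (1 / B) * ‖f‖^2 ≤ IU := by
    have hIT' : IT ≤ B * ‖f‖^2 := hΛBessel f
    have h : ‖f‖^2 ≤ Real.sqrt IU * Real.sqrt (B * ‖f‖^2) := by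
      refine le_trans (le_trans hcs1 hcs2) ?_
      exact mul_le_mul_of_nonneg_left (Real.sqrt_le_sqrt hIT') (Real.sqrt_nonneg _)
    have hsq1 : (Real.sqrt IU)^2 = IU := Real.sq_sqrt hIUnn
    have hsq2 : (Real.sqrt (B * ‖f‖^2))^2 = B * ‖f‖^2 := Real.sq_sqrt (by positivity)
    by_cases hf0 : f = 0
    · simpa [hf0] using hIUnn
    · have hfpos : (0:ℝ) < ‖f‖^2 := pow_pos (norm_pos_iff.mpr hf0) 2
      have h4 := mul_self_le_mul_self (le_of_lt hfpos) h
      rw [div_mul_eq_mul_div, one_mul, div_le_iff₀ hB]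
      nlinarith [h4, hsq1, hsq2, hfpos]
  exact ⟨intU, hlower, hupper⟩
end

section
/- Let Λ_TU = {(F(x), Λ_x, v(x))}_{x∈X} be a continuous (T,U)-controlled g-fusion frame for H with bounds A, B, let G, Γ_x give a second weakly measurable family Γ_TU = {(G(x), Γ_x, v(x))}_{x∈X} (same weight v), and suppose v² is integrable over X. Suppose there exist constants λ₁, λ₂ ∈ [0,1) and μ' ≥ 0 with A(1 − λ₁) − μ' ∫_X v(x)² dμ(x) > 0 such that for every x ∈ X and f ∈ H: 0 ≤ ⟨T*(P_{G(x)} Γ_x* Γ_x P_{G(x)} − P_{F(x)} Λ_x* Λ_x P_{F(x)}) U f, f⟩ ≤ λ₁ ⟨T* P_{F(x)} Λ_x* Λ_x P_{F(x)} U f, f⟩ + λ₂ ⟨T* P_{G(x)} Γ_x* Γ_x P_{G(x)} U f, f⟩ + μ' ‖f‖². Then Γ_TU is a continuous (T,U)-controlled g-fusion frame for H with lower bound [(1 − λ₁)A − μ' ∫_X v(x)² dμ(x)] / (1 + λ₂) and upper bound [(1 + λ₁)B + μ' ∫_X v(x)² dμ(x)] / (1 − λ₂). -/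
open MeasureTheory ContinuousLinearMap
open scoped ComplexOrder

lemma ctrlProj_inner_key {H Kk : Type*} [NormedAddCommGroup H] [InnerProductSpace ℂ H]
    [CompleteSpace H] [NormedAddCommGroup Kk] [InnerProductSpace ℂ Kk] [CompleteSpace Kk]
    (M : Submodule ℂ H) [M.HasOrthogonalProjection]
    (L : H →L[ℂ] Kk) (T : H →L[ℂ] H) (u f : H) :
    (inner ℂ ((adjoint T) ((ctrlProj M) ((adjoint L) (L ((ctrlProj M) u))))) f : ℂ)
      = inner ℂ (L ((ctrlProj M) u)) (L ((ctrlProj M) (T f))) := by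
  have hP : ctrlProj M = M.starProjection := rfl
  rw [hP]
  rw [ContinuousLinearMap.adjoint_inner_left, Submodule.inner_starProjection_left_eq_right,
    ContinuousLinearMap.adjoint_inner_left]

/-- (Perturbation.)  Let `Λ_TU` be a continuous `(T,U)`-controlled `g`-fusion
frame for `H` with bounds `A, B`, let `Γ_TU` be a second family with the same weight `v`, and
suppose `0 ≤ λ₁, λ₂ < 1` and `ε ≥ 0` satisfy `A(1 − λ₁) − ε ∫ v² dμ > 0` and, for all `x, f`,
`0 ≤ ⟨T*(P_{G x} Γₓ* Γₓ P_{G x} − P_{F x} Λₓ* Λₓ P_{F x}) U f, f⟩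
  ≤ λ₁ ⟨T* P_{F x} Λₓ* Λₓ P_{F x} U f, f⟩ + λ₂ ⟨T* P_{G x} Γₓ* Γₓ P_{G x} U f, f⟩ + ε‖f‖²`.
Then `Γ_TU` is a continuous `(T,U)`-controlled `g`-fusion frame for `H` with bounds
`((1 − λ₁)A − ε ∫ v²)/(1 + λ₂)` and `((1 + λ₁)B + ε ∫ v²)/(1 − λ₂)`. -/
theorem stmt18
    {H : Type*} [NormedAddCommGroup H] [InnerProductSpace ℂ H] [CompleteSpace H]
    {X : Type*} [MeasurableSpace X] (μ : Measure X)
    {K : X → Type*} [∀ x, NormedAddCommGroup (K x)] [∀ x, InnerProductSpace ℂ (K x)]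
    [∀ x, CompleteSpace (K x)]
    (F G : X → Submodule ℂ H) [∀ x, (F x).HasOrthogonalProjection]
    [∀ x, (G x).HasOrthogonalProjection]
    (Λ Γ : ∀ x, H →L[ℂ] K x) (v : X → ℝ) (T U : H →L[ℂ] H)
    (hv : Measurable v) (hvpos : ∀ x, 0 < v x)
    (hT : T.IsPositive) (hU : U.IsPositive) (hTinv : IsUnit T) (hUinv : IsUnit U)
    (hFmeas : ∀ f g : H, Measurable fun x => (inner ℂ ((ctrlProj (F x)) f) g : ℂ))
    (hGmeas : ∀ f g : H, Measurable fun x => (inner ℂ ((ctrlProj (G x)) f) g : ℂ))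
    (hv2 : Integrable (fun x => (v x)^2) μ)
    (A B : ℝ) (hA : 0 < A) (hAB : A ≤ B)
    -- Λ_TU is a continuous (T,U)-controlled g-fusion frame with bounds A, B
    (hΛint : ∀ f : H, Integrable (fun x => ((v x : ℂ))^2 *
      (inner ℂ (Λ x ((ctrlProj (F x)) (U f))) (Λ x ((ctrlProj (F x)) (T f))) : ℂ)) μ)
    (hΛframe : ∀ f : H,
      ((A * ‖f‖^2 : ℝ) : ℂ) ≤
        (∫ x, ((v x : ℂ))^2 *
          (inner ℂ (Λ x ((ctrlProj (F x)) (U f))) (Λ x ((ctrlProj (F x)) (T f))) : ℂ) ∂μ) ∧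
      (∫ x, ((v x : ℂ))^2 *
          (inner ℂ (Λ x ((ctrlProj (F x)) (U f))) (Λ x ((ctrlProj (F x)) (T f))) : ℂ) ∂μ)
        ≤ ((B * ‖f‖^2 : ℝ) : ℂ))
    -- the Γ-integrand is integrable
    (hΓint : ∀ f : H, Integrable (fun x => ((v x : ℂ))^2 *
      (inner ℂ (Γ x ((ctrlProj (G x)) (U f))) (Γ x ((ctrlProj (G x)) (T f))) : ℂ)) μ)
    -- the perturbation constants
    (lam₁ lam₂ ε : ℝ) (hlam₁ : 0 ≤ lam₁) (hlam₁' : lam₁ < 1)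
    (hlam₂ : 0 ≤ lam₂) (hlam₂' : lam₂ < 1) (hε : 0 ≤ ε)
    (hpos : 0 < A * (1 - lam₁) - ε * ∫ x, (v x)^2 ∂μ)
    -- the pointwise perturbation condition
    (hpert : ∀ (x : X) (f : H),
      (0 : ℂ) ≤ (inner ℂ ((adjoint T)
          ((ctrlProj (G x)) ((adjoint (Γ x)) (Γ x ((ctrlProj (G x)) (U f)))) -
           (ctrlProj (F x)) ((adjoint (Λ x)) (Λ x ((ctrlProj (F x)) (U f)))))) f : ℂ) ∧
      (inner ℂ ((adjoint T)
          ((ctrlProj (G x)) ((adjoint (Γ x)) (Γ x ((ctrlProj (G x)) (U f)))) -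
           (ctrlProj (F x)) ((adjoint (Λ x)) (Λ x ((ctrlProj (F x)) (U f)))))) f : ℂ)
        ≤ ((lam₁ : ℂ) *
            (inner ℂ ((adjoint T) ((ctrlProj (F x)) ((adjoint (Λ x))
              (Λ x ((ctrlProj (F x)) (U f)))))) f : ℂ) +
          (lam₂ : ℂ) *
            (inner ℂ ((adjoint T) ((ctrlProj (G x)) ((adjoint (Γ x))
              (Γ x ((ctrlProj (G x)) (U f)))))) f : ℂ) +
          ((ε * ‖f‖^2 : ℝ) : ℂ))) :
    ∀ f : H,
      (((A * (1 - lam₁) - ε * ∫ x, (v x)^2 ∂μ) / (1 + lam₂) * ‖f‖^2 : ℝ) : ℂ) ≤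
        (∫ x, ((v x : ℂ))^2 *
          (inner ℂ (Γ x ((ctrlProj (G x)) (U f))) (Γ x ((ctrlProj (G x)) (T f))) : ℂ) ∂μ) ∧
      (∫ x, ((v x : ℂ))^2 *
          (inner ℂ (Γ x ((ctrlProj (G x)) (U f))) (Γ x ((ctrlProj (G x)) (T f))) : ℂ) ∂μ)
        ≤ (((B * (1 + lam₁) + ε * ∫ x, (v x)^2 ∂μ) / (1 - lam₂) * ‖f‖^2 : ℝ) : ℂ) := by
  
  intro f
  have hI0 : (0:ℝ) ≤ ∫ x, (v x)^2 ∂μ := integral_nonneg fun x => sq_nonneg _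
  set I : ℝ := ∫ x, (v x)^2 ∂μ with hI
  set N : ℝ := ‖f‖^2 with hN
  have hN0 : 0 ≤ N := sq_nonneg _
  set a : X → ℂ := fun x => inner ℂ (Λ x ((ctrlProj (F x)) (U f))) (Λ x ((ctrlProj (F x)) (T f))) with ha
  set b : X → ℂ := fun x => inner ℂ (Γ x ((ctrlProj (G x)) (U f))) (Γ x ((ctrlProj (G x)) (T f))) with hb
  have hpt : ∀ x, (0:ℂ) ≤ b x - a x ∧
      b x - a x ≤ (lam₁:ℂ) * a x + (lam₂:ℂ) * b x + ((ε * N : ℝ) : ℂ) := by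
    intro x
    have h1 := (hpert x f).1
    have h2 := (hpert x f).2
    have e1 := ctrlProj_inner_key (F x) (Λ x) T (U f) f
    have e2 := ctrlProj_inner_key (G x) (Γ x) T (U f) f
    have esub : (inner ℂ ((adjoint T)
          ((ctrlProj (G x)) ((adjoint (Γ x)) (Γ x ((ctrlProj (G x)) (U f)))) -
           (ctrlProj (F x)) ((adjoint (Λ x)) (Λ x ((ctrlProj (F x)) (U f)))))) f : ℂ)
        = b x - a x := by
      rw [map_sub, inner_sub_left, e1, e2]
    rw [esub] at h1 h2
    rw [e1, e2] at h2
    exact ⟨h1, h2⟩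
  have him : ∀ x, (b x).im = (a x).im := by
    intro x
    have h0 := (Complex.le_def.mp (hpt x).1).2
    simp only [Complex.zero_im, Complex.sub_im] at h0
    linarith
  have hle1 : ∀ x, (a x).re ≤ (b x).re := by
    intro x
    have h0 := (Complex.le_def.mp (hpt x).1).1
    simp only [Complex.zero_re, Complex.sub_re] at h0
    linarith
  have hle2 : ∀ x, (1 - lam₂) * (b x).re ≤ (1 + lam₁) * (a x).re + ε * N := by
    intro x
    have h0 := (Complex.le_def.mp (hpt x).2).1
    simp only [Complex.sub_re, Complex.add_re, Complex.mul_re, Complex.ofReal_re,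
      Complex.ofReal_im, zero_mul, sub_zero] at h0
    linarith
  -- the complex integrands
  have haf : Integrable (fun x => ((v x : ℂ))^2 * a x) μ := hΛint f
  have hbf : Integrable (fun x => ((v x : ℂ))^2 * b x) μ := hΓint f
  have hre : ∀ (z : ℂ) (x : X), (((v x : ℂ))^2 * z).re = (v x)^2 * z.re := by
    intro z x
    rw [← Complex.ofReal_pow, Complex.re_ofReal_mul]
  have him' : ∀ (z : ℂ) (x : X), (((v x : ℂ))^2 * z).im = (v x)^2 * z.im := by
    intro z x
    rw [← Complex.ofReal_pow, Complex.im_ofReal_mul]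
  have hafre_int : Integrable (fun x => (v x)^2 * (a x).re) μ := by
    have := haf.re
    exact this.congr (Filter.Eventually.of_forall fun x => by
      simp only [RCLike.re_to_complex]; exact hre (a x) x)
  have hbfre_int : Integrable (fun x => (v x)^2 * (b x).re) μ := by
    have := hbf.re
    exact this.congr (Filter.Eventually.of_forall fun x => by
      simp only [RCLike.re_to_complex]; exact hre (b x) x)
  have hafre : ∫ x, (v x)^2 * (a x).re ∂μ = (∫ x, ((v x : ℂ))^2 * a x ∂μ).re := by
    have h := integral_re haf
    simp only [RCLike.re_to_complex] at h
    rw [← h]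
    exact integral_congr_ae (Filter.Eventually.of_forall fun x => (hre (a x) x).symm)
  have hbfre : ∫ x, (v x)^2 * (b x).re ∂μ = (∫ x, ((v x : ℂ))^2 * b x ∂μ).re := by
    have h := integral_re hbf
    simp only [RCLike.re_to_complex] at h
    rw [← h]
    exact integral_congr_ae (Filter.Eventually.of_forall fun x => (hre (b x) x).symm)
  -- frame bounds for a
  obtain ⟨hAf, hBf⟩ := hΛframe f
  have hAre : A * N ≤ (∫ x, ((v x : ℂ))^2 * a x ∂μ).re := by
    have h := (Complex.le_def.mp hAf).1
    simp only [Complex.ofReal_re] at h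
    exact h
  have hBre : (∫ x, ((v x : ℂ))^2 * a x ∂μ).re ≤ B * N := by
    have h := (Complex.le_def.mp hBf).1
    simp only [Complex.ofReal_re] at h
    exact h
  have hImA : (∫ x, ((v x : ℂ))^2 * a x ∂μ).im = 0 := by
    have h := (Complex.le_def.mp hAf).2
    simp only [Complex.ofReal_im] at h
    exact h.symm
  have hImB : (∫ x, ((v x : ℂ))^2 * b x ∂μ).im = 0 := by
    have h := integral_im hbf
    simp only [RCLike.im_to_complex] at h
    rw [← h]
    have h2 := integral_im haf
    simp only [RCLike.im_to_complex] at h2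
    have : (fun x => (((v x : ℂ))^2 * b x).im) = fun x => (((v x : ℂ))^2 * a x).im := by
      funext x
      rw [him' (b x) x, him' (a x) x, him x]
    rw [this, h2, hImA]
  -- lower bound in ℝ
  have hSab : ∫ x, (v x)^2 * (a x).re ∂μ ≤ ∫ x, (v x)^2 * (b x).re ∂μ := by
    refine integral_mono hafre_int hbfre_int fun x => ?_
    exact mul_le_mul_of_nonneg_left (hle1 x) (sq_nonneg _)
  -- upper bound in ℝ
  have hkey : (1 - lam₂) * ∫ x, (v x)^2 * (b x).re ∂μ
      ≤ (1 + lam₁) * (∫ x, (v x)^2 * (a x).re ∂μ) + ε * N * I := by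
    have hmono : ∫ x, (1 - lam₂) * ((v x)^2 * (b x).re) ∂μ
        ≤ ∫ x, ((1 + lam₁) * ((v x)^2 * (a x).re) + ε * N * (v x)^2) ∂μ := by
      refine integral_mono (hbfre_int.const_mul _)
        ((hafre_int.const_mul _).add (hv2.const_mul _)) fun x => ?_
      have h := mul_le_mul_of_nonneg_left (hle2 x) (sq_nonneg (v x))
      nlinarith [sq_nonneg (v x)]
    rw [integral_const_mul] at hmono
    rw [integral_add (hafre_int.const_mul _) (hv2.const_mul _), integral_const_mul,
      integral_const_mul] at hmono
    exact hmono
  have hl2 : (0:ℝ) < 1 - lam₂ := by linarith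
  have hl2' : (0:ℝ) < 1 + lam₂ := by linarith
  constructor
  · rw [Complex.le_def]
    constructor
    · simp only [Complex.ofReal_re]
      rw [← hbfre]
      have h1 : (A * (1 - lam₁) - ε * I) / (1 + lam₂) ≤ A := by
        rw [div_le_iff₀ hl2']
        nlinarith [mul_nonneg hε hI0, mul_nonneg hlam₁ hA.le, mul_nonneg hlam₂ hA.le]
      have h2 : (A * (1 - lam₁) - ε * I) / (1 + lam₂) * N ≤ A * N :=
        mul_le_mul_of_nonneg_right h1 hN0
      linarith [hAre, hSab, hafre, hbfre]
    · simp only [Complex.ofReal_im]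
      exact hImB.symm
  · rw [Complex.le_def]
    constructor
    · simp only [Complex.ofReal_re]
      rw [← hbfre]
      rw [div_mul_eq_mul_div, le_div_iff₀ hl2]
      have hSa : ∫ x, (v x)^2 * (a x).re ∂μ ≤ B * N := by rw [hafre]; exact hBre
      have h3 : (1 + lam₁) * (∫ x, (v x)^2 * (a x).re ∂μ) ≤ (1 + lam₁) * (B * N) :=
        mul_le_mul_of_nonneg_left hSa (by linarith)
      nlinarith [mul_nonneg hε hI0, mul_nonneg (mul_nonneg hε hN0) hI0]
    · simp only [Complex.ofReal_im]
      exact hImB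
end
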